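/- For all positive integers n and m with m odd, the following identity of polynomials in x over ℚ holds: $E_{n-1}^{(n)}(x) \;=\; (-1)^{n} \sum_{s=0}^{n-1}\sum_{k=0}^{s} \binom{s}{k}\binom{n-1}{s}\,(-n)^{s-k}\, T_k^{(n)}(m)\, m^{n-s-1}\, E_{n-1-s}^{(n)}\!\left(\frac{x}{m}\right)$, where $E_{n-1-s}^{(n)}(x/m)$ denotes the polynomial $E_{n-1-s}^{(n)}$ evaluated with x replaced by x/m. -/

import Mathlib

open PowerSeries Polynomial Finset

/-- The weighted sum `v₁ + 2v₂ + ⋯ + m·v_m` of a tuple `v : Fin m → ℕ`. -/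
def tupleWeight (m : ℕ) (v : Fin m → ℕ) : ℕ := ∑ i : Fin m, (i.1 + 1) * v i

/-- The multiple alternating power sum
    `T_k^{(n)}(m) = ∑_{0 ≤ v₁,…,v_m ≤ n, v₁+⋯+v_m = n}
       (n choose v₁,…,v_m) (-1)^{v₁+2v₂+⋯+m·v_m} (v₁+2v₂+⋯+m·v_m)^k`. -/
noncomputable def multiAltPowerSum (n m k : ℕ) : ℚ :=
  ∑ v ∈ (Fintype.piFinset fun _ : Fin m => Finset.range (n + 1)).filter
      (fun v => ∑ i : Fin m, v i = n),
    (Nat.multinomial Finset.univ v : ℚ) * (-1 : ℚ) ^ (tupleWeight m v) *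
      (tupleWeight m v : ℚ) ^ k

/-- The formal power series `(e^t + 1)/2` over `ℚ[y]`. -/
noncomputable def eexp : PowerSeries (Polynomial ℚ) :=
  PowerSeries.mk fun k =>
    Polynomial.C ((if k = 0 then 2 else ((k.factorial : ℚ))⁻¹) / 2)

/-- The formal power series `e^{yt} = ∑_k y^k t^k/k!` over `ℚ[y]` (with `y = X`). -/
noncomputable def expPoly : PowerSeries (Polynomial ℚ) :=
  PowerSeries.mk fun k => Polynomial.C ((k.factorial : ℚ)⁻¹) * Polynomial.X ^ k

/-- The Euler polynomial `E_n^{(α)}(y)` of order `α`, defined by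
    `(2/(e^t+1))^α e^{yt} = ∑_n E_n^{(α)}(y) t^n/n!`. -/
noncomputable def eulerH (α n : ℕ) : Polynomial ℚ :=
  (n.factorial : ℚ) • PowerSeries.coeff (R := Polynomial ℚ) n
    ((PowerSeries.invOfUnit eexp 1) ^ α * expPoly)

/-!
Write `E = e^t` and `S = ∑_{j=1}^m (-E)^j`. For odd `m` the geometric sum gives
`S (E + 1) = -E (E^m + 1)`, hence `(2/(e^t+1))^n = (-1)^n S^n e^{-nt} (2/(e^{mt}+1))^n`.
Since `e^{xt} = e^{(x/m)(mt)}`, this writes the generating function of `E_l^{(n)}(x)` as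
`(-1)^n S^n e^{-nt}` times the generating function of `m^l E_l^{(n)}(x/m)`. By the
multinomial theorem `S^n = ∑_k T_k^{(n)}(m) t^k/k!`, and comparing coefficients of `t^{n-1}`
gives the identity.
-/

open scoped Nat

section ExponentialGeneratingFunctions

variable {A : Type*}

theorem factorial_nsmul_coeff_mul [CommSemiring A] (f g : PowerSeries A) (n : ℕ) :
    n ! • PowerSeries.coeff n (f * g) = ∑ k ∈ range (n + 1), n.choose k •
      ((k ! • PowerSeries.coeff k f) * ((n - k)! • PowerSeries.coeff (n - k) g)) := by
  rw [PowerSeries.coeff_mul, Nat.sum_antidiagonal_eq_sum_range_succ_mk, smul_sum]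
  refine sum_congr rfl fun k hk => ?_
  rw [smul_mul_smul_comm, smul_smul, ← mul_assoc,
    Nat.choose_mul_factorial_mul_factorial (mem_range_succ_iff.mp hk)]

theorem factorial_nsmul_coeff_rescale_exp [CommRing A] [Algebra ℚ A] (a : A) (k : ℕ) :
    k ! • PowerSeries.coeff k (rescale a (exp A)) = a ^ k := by
  rw [coeff_rescale, coeff_exp, nsmul_eq_mul, mul_left_comm, ← map_natCast (algebraMap ℚ A),
    ← map_mul, mul_one_div_cancel (by positivity), map_one, mul_one]

theorem sum_neg_pow_succ_mul_one_add [CommRing A] (x : A) {m : ℕ} (hm : Odd m) :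
    (∑ i : Fin m, (-x) ^ (i.1 + 1)) * (1 + x) = -(x * (1 + x ^ m)) := by
  have hgeom := geom_sum_mul (-x) m
  rw [hm.neg_pow] at hgeom
  rw [Fin.sum_univ_eq_sum_range (fun i => (-x) ^ (i + 1)) m]
  simp only [pow_succ', ← mul_sum]
  linear_combination x * hgeom

theorem piFinset_range_filter_sum_eq_piAntidiag (m n : ℕ) :
    {v ∈ Fintype.piFinset fun _ : Fin m => range (n + 1) | ∑ i, v i = n} =
      piAntidiag univ n := by
  ext v
  simp only [mem_filter, Fintype.mem_piFinset, mem_range, mem_piAntidiag, mem_univ, implies_true,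
    and_true, and_iff_right_iff_imp]
  intro h i
  exact Nat.lt_succ_of_le (h ▸ single_le_sum (fun j _ => Nat.zero_le (v j)) (mem_univ i))

theorem factorial_nsmul_coeff_sum_neg_exp_pow [CommRing A] [Algebra ℚ A] (n m k : ℕ) :
    k ! • PowerSeries.coeff k ((∑ i : Fin m, (-exp A) ^ (i.1 + 1)) ^ n) =
      algebraMap ℚ A (multiAltPowerSum n m k) := by
  rw [sum_pow_eq_sum_piAntidiag, multiAltPowerSum, piFinset_range_filter_sum_eq_piAntidiag,
    map_sum, smul_sum, map_sum]
  refine sum_congr rfl fun v _ => ?_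
  have hprod : ∏ i : Fin m, ((-exp A) ^ (i.1 + 1)) ^ v i =
      (-1) ^ tupleWeight m v * rescale (tupleWeight m v : A) (exp A) := by
    rw [← exp_pow_eq_rescale_exp, ← mul_pow, neg_one_mul, tupleWeight, ← prod_pow_eq_pow_sum]
    simp only [← pow_mul, mul_comm]
  have hconst : (Nat.multinomial univ v : PowerSeries A) * (-1) ^ tupleWeight m v =
      PowerSeries.C (algebraMap ℚ A (Nat.multinomial univ v * (-1) ^ tupleWeight m v)) := by
    simp only [map_mul, map_pow, map_neg, map_one, map_natCast]
  rw [hprod, ← mul_assoc, hconst, PowerSeries.coeff_C_mul, ← mul_smul_comm,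
    factorial_nsmul_coeff_rescale_exp, map_mul (algebraMap ℚ A) _ (_ ^ k), map_pow, map_natCast]

end ExponentialGeneratingFunctions

/-- The substitution `t ↦ m t`, `x ↦ x / m`: it fixes `e^{xt}` and maps `e^t` to `e^{mt}`. -/
noncomputable def dilate (m : ℕ) : PowerSeries ℚ[X] →+* PowerSeries ℚ[X] :=
  (rescale (Polynomial.C (m : ℚ))).comp
    (PowerSeries.map (compRingHom (Polynomial.C (m : ℚ)⁻¹ * Polynomial.X)))

theorem factorial_nsmul_coeff_dilate (m k : ℕ) (f : PowerSeries ℚ[X]) :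
    k ! • PowerSeries.coeff k (dilate m f) = Polynomial.C ((m : ℚ) ^ k) *
      (k ! • PowerSeries.coeff k f).comp (Polynomial.C (m : ℚ)⁻¹ * Polynomial.X) := by
  rw [dilate, RingHom.comp_apply, coeff_rescale, PowerSeries.coeff_map, ← map_pow,
    ← mul_smul_comm, ← coe_compRingHom_apply, map_nsmul]

theorem dilate_exp (m : ℕ) : dilate m (exp ℚ[X]) = exp ℚ[X] ^ m := by
  rw [dilate, RingHom.comp_apply, map_exp, exp_pow_eq_rescale_exp, map_natCast]

theorem expPoly_eq_rescale_X_exp : expPoly = rescale Polynomial.X (exp ℚ[X]) := by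
  ext k : 1
  rw [expPoly, PowerSeries.coeff_mk, coeff_rescale, coeff_exp, Polynomial.algebraMap_eq, one_div,
    mul_comm]

theorem dilate_expPoly {m : ℕ} (hm : m ≠ 0) : dilate m expPoly = expPoly := by
  rw [expPoly_eq_rescale_X_exp, dilate, RingHom.comp_apply, ← rescale_map, map_exp,
    rescale_rescale, coe_compRingHom_apply, X_comp, mul_comm, ← mul_assoc, ← C_mul,
    mul_inv_cancel₀ (by exact_mod_cast hm), C_1, one_mul]

theorem eexp_eq : eexp = (2⁻¹ : ℚ) • (1 + exp ℚ[X]) := by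
  ext k : 1
  rw [eexp, PowerSeries.coeff_mk, PowerSeries.coeff_smul, map_add, PowerSeries.coeff_one,
    coeff_exp, Polynomial.algebraMap_eq, Polynomial.smul_eq_C_mul, ← C_1,
    ← map_zero Polynomial.C, ← apply_ite, ← C_add, ← C_mul]
  congr 1
  split_ifs with hk
  · norm_num [hk]
  · ring

theorem sum_neg_exp_pow_mul_eexp {m : ℕ} (hm : Odd m) :
    (∑ i : Fin m, (-exp ℚ[X]) ^ (i.1 + 1)) * eexp = -(exp ℚ[X] * dilate m eexp) := by
  rw [eexp_eq, map_rat_smul, map_add, map_one, dilate_exp, mul_smul_comm, mul_smul_comm,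
    sum_neg_pow_succ_mul_one_add _ hm, smul_neg]

noncomputable def eulerGenFun (α : ℕ) : PowerSeries ℚ[X] :=
  PowerSeries.invOfUnit eexp 1 ^ α * expPoly

theorem eulerH_eq_factorial_nsmul_coeff (α k : ℕ) :
    eulerH α k = k ! • PowerSeries.coeff k (eulerGenFun α) :=
  Nat.cast_smul_eq_nsmul ℚ _ _

theorem eulerGenFun_eq_mul_dilate (n : ℕ) {m : ℕ} (hm : Odd m) :
    eulerGenFun n = (-1) ^ n * ((∑ i : Fin m, (-exp ℚ[X]) ^ (i.1 + 1)) ^ n *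
      rescale (-(n : ℚ[X])) (exp ℚ[X])) * dilate m (eulerGenFun n) := by
  set S := ∑ i : Fin m, (-exp ℚ[X]) ^ (i.1 + 1)
  set R := rescale (-(n : ℚ[X])) (exp ℚ[X])
  set D := PowerSeries.invOfUnit eexp 1
  have hD : (eexp * D) ^ n = 1 := by
    rw [PowerSeries.mul_invOfUnit _ _ (by simp [eexp]), one_pow]
  have hdilateD : (dilate m eexp * dilate m D) ^ n = 1 := by
    rw [← map_mul, ← map_pow, hD, map_one]
  have hexp : exp ℚ[X] ^ n * R = 1 := by
    rw [exp_pow_eq_rescale_exp, exp_mul_exp_eq_exp_add, add_neg_cancel, rescale_zero_apply,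
      constantCoeff_exp, map_one]
  have hsign : ((-1) ^ n * (-1) ^ n : PowerSeries ℚ[X]) = 1 := by
    rw [← mul_pow, neg_one_mul, neg_neg, one_pow]
  have hsum := congrArg (· ^ n) (sum_neg_exp_pow_mul_eexp hm)
  simp only [neg_pow (exp ℚ[X] * _), mul_pow] at hsum
  -- the `n`-th power of `hsum`, divided by `eexp ^ n`, `exp ^ n` and `(dilate m D) ^ n`
  have hDn : D ^ n = (-1) ^ n * S ^ n * R * dilate m D ^ n := by
    linear_combination (-1) ^ n * S ^ n * R * dilate m D ^ n * hD
      - (-1) ^ n * D ^ n * R * dilate m D ^ n * hsum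
      - exp ℚ[X] ^ n * R * (dilate m eexp * dilate m D) ^ n * D ^ n * hsign
      - exp ℚ[X] ^ n * R * D ^ n * hdilateD - D ^ n * hexp
  rw [eulerGenFun, map_mul, map_pow, dilate_expPoly hm.pos.ne', hDn]
  ring

theorem kim_thm5_general (n m : ℕ) (hn : 0 < n) (hodd : Odd m) :
    eulerH n (n - 1)
      = Polynomial.C ((-1 : ℚ) ^ n) *
          ∑ s ∈ Finset.range n, ∑ k ∈ Finset.range (s + 1),
            Polynomial.C ((s.choose k : ℚ) * ((n - 1).choose s : ℚ) * (-(n : ℚ)) ^ (s - k) *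
                multiAltPowerSum n m k * (m : ℚ) ^ (n - s - 1)) *
              (eulerH n (n - 1 - s)).comp (Polynomial.C ((m : ℚ)⁻¹) * Polynomial.X) := by
  have hsign : ((-1) ^ n : PowerSeries ℚ[X]) = PowerSeries.C (Polynomial.C ((-1 : ℚ) ^ n)) := by
    simp
  rw [eulerH_eq_factorial_nsmul_coeff, eulerGenFun_eq_mul_dilate n hodd, hsign, mul_assoc,
    PowerSeries.coeff_C_mul, ← mul_smul_comm, factorial_nsmul_coeff_mul, Nat.sub_add_cancel hn]
  congr 1
  refine sum_congr rfl fun s _ => ?_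
  rw [factorial_nsmul_coeff_mul, factorial_nsmul_coeff_dilate, ← eulerH_eq_factorial_nsmul_coeff,
    sum_mul, smul_sum]
  refine sum_congr rfl fun k _ => ?_
  rw [factorial_nsmul_coeff_sum_neg_exp_pow, factorial_nsmul_coeff_rescale_exp,
    Nat.sub_right_comm]
  simp only [nsmul_eq_mul, Polynomial.algebraMap_eq, map_mul, map_pow, map_neg, map_natCast]
  ring

/-- Theorem 5 of Kim–Kim: for `n, m ≥ 1` with `m` odd,
`E_{n-1}^{(n)}(x) = (-1)^n ∑_{s=0}^{n-1} ∑_{k=0}^{s} C(s,k)C(n-1,s)(-n)^{s-k} T_k^{(n)}(m)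
    m^{n-s-1} E_{n-1-s}^{(n)}(x/m)`. -/
theorem kim_thm5 (n m : ℕ) (hn : 0 < n) (hm : 0 < m) (hodd : Odd m) :
    eulerH n (n - 1)
      = Polynomial.C ((-1 : ℚ) ^ n) *
          ∑ s ∈ Finset.range n, ∑ k ∈ Finset.range (s + 1),
            Polynomial.C ((s.choose k : ℚ) * ((n - 1).choose s : ℚ) * (-(n : ℚ)) ^ (s - k) *
                multiAltPowerSum n m k * (m : ℚ) ^ (n - s - 1)) *
              (eulerH n (n - 1 - s)).comp (Polynomial.C ((m : ℚ)⁻¹) * Polynomial.X) :=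
  kim_thm5_general n m hn hodd
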